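/- arXiv:2010.08623 — 2 statements merged into one kernel-verified Lean document; each statement's English description precedes it below -/
import Mathlib

section
/- Let k be a field and t ∈ k with t¹² ≠ 1, and let F(x,y,z,w) = x⁴ − x y³ − z⁴ + z w³. Then for (a,b) ∈ k², F(t³a, b, a, tb) = 0 if and only if a = 0. Consequently the line L_t of ℙ³ spanned by (t³, 0, 1, 0) and (0, 1, 0, t) meets the quartic surface X = {F = 0} in the single point (0 : 1 : 0 : t), the restriction of F to L_t being the binary quartic (t¹² − 1)·a⁴, i.e. a nonzero constant times the fourth power of a linear form; in particular every root of this restriction has multiplicity ≥ 2, so L_t is a bitangent (indeed a quadritangent) line to X. -/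
/-- The quartic form `F(x,y,z,w) = x⁴ − x y³ − z⁴ + z w³` of the paper's Example. -/
def quarticF {R : Type*} [CommRing R] (x y z w : R) : R :=
  x ^ 4 - x * y ^ 3 - z ^ 4 + z * w ^ 3

/-- For `t¹² ≠ 1`, the restriction of `F` to the line `L_t` spanned by `(t³,0,1,0)`
and `(0,1,0,t)` is the binary quartic `(t¹² − 1)·a⁴`, and it vanishes exactly when
`a = 0`: the line `L_t` meets `X = {F = 0}` only at the point `(0:1:0:t)`, every
root of the restriction having multiplicity ≥ 2 (indeed 4), so `L_t` is a
bitangent (quadritangent) line to `X`. -/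
theorem line_quadritangent_of_not_twelfth_root {k : Type*} [Field k]
    (t : k) (ht : t ^ 12 ≠ 1) :
    ∀ a b : k,
      quarticF (t ^ 3 * a) b a (t * b) = (t ^ 12 - 1) * a ^ 4 ∧
      (quarticF (t ^ 3 * a) b a (t * b) = 0 ↔ a = 0) := by
  intro a b
  have h : quarticF (t ^ 3 * a) b a (t * b) = (t ^ 12 - 1) * a ^ 4 := by
    simp only [quarticF]; ring
  refine ⟨h, ?_⟩
  rw [h]
  constructor
  · intro h0
    rcases mul_eq_zero.mp h0 with h1 | h1
    · exact absurd (by linear_combination h1) ht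
    · exact pow_eq_zero_iff (by norm_num) |>.mp h1
  · intro h0; rw [h0]; ring
end

section
/- Let F(x,y,z,w) = x⁴ − x y³ − z⁴ + z w³ ∈ ℚ[x,y,z,w]. The set of 2-dimensional ℚ-subspaces W ⊆ ℚ⁴ with the following two properties is infinite: (i) F does not vanish identically on W, and (ii) for some (equivalently, any) basis (u, v) of W, every root in ℙ¹ over an algebraic closure of the nonzero binary quartic (a,b) ↦ F(au + bv) has multiplicity at least 2. In other words, the smooth quartic surface X : x⁴ − xy³ = z⁴ − zw³ admits infinitely many bitangent lines defined over ℚ. -/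
open Polynomial

/-- The dehomogenization `T ↦ F(T·u + v)` of the binary quartic obtained by
restricting `F` to the line spanned by `u` and `v`. -/
noncomputable def restrictF (u v : Fin 4 → ℚ) : Polynomial ℚ :=
  quarticF (C (u 0) * X + C (v 0)) (C (u 1) * X + C (v 1))
    (C (u 2) * X + C (v 2)) (C (u 3) * X + C (v 3))

/-- `1 - t^3 ≠ 0` for rational `t ≠ 1`. -/
lemma aux_cube_ne_one {t : ℚ} (ht : t ≠ 1) : 1 - t ^ 3 ≠ 0 := by
  intro h
  have h1 : (1 - t) * (1 + t + t ^ 2) = 0 := by linear_combination h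
  have h2 : (1 : ℚ) + t + t ^ 2 ≠ 0 := by nlinarith [sq_nonneg (t + 1/2), sq_nonneg t]
  rcases mul_eq_zero.1 h1 with h | h
  · exact ht (by linarith)
  · exact h2 h

/-- Key multiplicity lemma: a nonzero constant times the fourth power of a nonzero
linear polynomial has every root of multiplicity at least 2. -/
lemma aux_mult {K : Type*} [Field K] {c a b : K} (hc : c ≠ 0) (hab : a ≠ 0 ∨ b ≠ 0)
    {α : K} (hroot : (C c * (C a * X + C b) ^ 4).IsRoot α) :
    2 ≤ (C c * (C a * X + C b) ^ 4).rootMultiplicity α := by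
  have hq : (C a * X + C b) ≠ 0 := by
    intro h
    rcases hab with ha | hb
    · have := congrArg (fun p => p.coeff 1) h
      simp at this
      exact ha this
    · have := congrArg (fun p => p.coeff 0) h
      simp at this
      exact hb this
  have hp : C c * (C a * X + C b) ^ 4 ≠ 0 := by
    exact mul_ne_zero (by simpa using hc) (pow_ne_zero _ hq)
  have hroot' : (C a * X + C b).IsRoot α := by
    simp only [IsRoot, eval_mul, eval_pow, eval_add, eval_C, eval_X] at hroot ⊢
    rcases mul_eq_zero.1 hroot with h | h
    · exact absurd h hc
    · exact pow_eq_zero_iff (by norm_num) |>.1 h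
  have hdvd : (X - C α) ∣ (C a * X + C b) := dvd_iff_isRoot.2 hroot'
  rw [le_rootMultiplicity_iff hp]
  calc (X - C α) ^ 2 ∣ (C a * X + C b) ^ 2 := pow_dvd_pow_of_dvd hdvd 2
    _ ∣ C c * (C a * X + C b) ^ 4 := ⟨C c * (C a * X + C b) ^ 2, by ring⟩

/-- The smooth quartic surface `X : x⁴ − xy³ = z⁴ − zw³` admits infinitely many
bitangent lines defined over ℚ: there are infinitely many 2-dimensional
ℚ-subspaces `W ⊆ ℚ⁴` on which `F` does not vanish identically and such that,
for any basis `(u,v)` of `W`, every root in ℙ¹ over an algebraic closure of the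
binary quartic `(a,b) ↦ F(au + bv)` has multiplicity at least 2 (roots in the
chart `b ≠ 0` are roots of `T ↦ F(Tu+v)`, roots in the chart `a ≠ 0` are roots
of `T ↦ F(u+Tv)`). -/
theorem infinitely_many_rational_bitangents :
    {W : Submodule ℚ (Fin 4 → ℚ) |
      Module.finrank ℚ W = 2 ∧
      (∃ w ∈ W, quarticF (w 0) (w 1) (w 2) (w 3) ≠ 0) ∧
      ∀ u v : Fin 4 → ℚ, Submodule.span ℚ {u, v} = W →
        (∀ α : AlgebraicClosure ℚ,
          ((restrictF u v).map (algebraMap ℚ (AlgebraicClosure ℚ))).IsRoot α →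
          2 ≤ ((restrictF u v).map (algebraMap ℚ (AlgebraicClosure ℚ))).rootMultiplicity α) ∧
        (∀ α : AlgebraicClosure ℚ,
          ((restrictF v u).map (algebraMap ℚ (AlgebraicClosure ℚ))).IsRoot α →
          2 ≤ ((restrictF v u).map (algebraMap ℚ (AlgebraicClosure ℚ))).rootMultiplicity α)
      }.Infinite := by
  classical
  -- the family of lines: W t = span {(1,t,0,0), (0,0,1,1)}
  set u : ℚ → (Fin 4 → ℚ) := fun t => ![1, t, 0, 0] with hu
  set v0 : Fin 4 → ℚ := ![0, 0, 1, 1] with hv0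
  set Wf : ℚ → Submodule ℚ (Fin 4 → ℚ) := fun t => Submodule.span ℚ {u t, v0} with hWf
  -- injectivity of t ↦ W t
  have huv_indep : ∀ t : ℚ, LinearIndependent ℚ ![u t, v0] := by
    intro t
    rw [LinearIndependent.pair_iff]
    intro s r hsr
    have h0 := congrFun hsr 0
    have h2 := congrFun hsr 2
    simp [hu, hv0] at h0 h2
    exact ⟨h0, h2⟩
  have hWmem : ∀ t, u t ∈ Wf t ∧ v0 ∈ Wf t := by
    intro t
    constructor
    · exact Submodule.subset_span (Set.mem_insert _ _)
    · exact Submodule.subset_span (Set.mem_insert_of_mem _ rfl)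
  have hinj : Function.Injective Wf := by
    intro s t hst
    have hs : u s ∈ Wf t := hst ▸ (hWmem s).1
    rw [hWf] at hs
    rw [Submodule.mem_span_pair] at hs
    obtain ⟨a, b, hab⟩ := hs
    have h0 := congrFun hab 0
    have h1 := congrFun hab 1
    simp [hu, hv0] at h0 h1
    rw [h0, one_mul] at h1
    exact h1.symm
  -- compute finrank along the way
  have hrank : ∀ t, Module.finrank ℚ (Wf t) = 2 := by
    intro t
    have := finrank_span_eq_card (R := ℚ) (huv_indep t)
    have hrange : Set.range ![u t, v0] = {u t, v0} := by
      simp only [Matrix.range_cons, Matrix.range_empty, Set.union_empty]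
      ext x
      simp only [Set.mem_union, Set.mem_singleton_iff, Set.mem_insert_iff]
    rw [hrange] at this
    simpa using this
  -- main membership claim
  have hmem : ∀ t : ℚ, t ≠ 1 → Wf t ∈
      {W : Submodule ℚ (Fin 4 → ℚ) |
      Module.finrank ℚ W = 2 ∧
      (∃ w ∈ W, quarticF (w 0) (w 1) (w 2) (w 3) ≠ 0) ∧
      ∀ u v : Fin 4 → ℚ, Submodule.span ℚ {u, v} = W →
        (∀ α : AlgebraicClosure ℚ,
          ((restrictF u v).map (algebraMap ℚ (AlgebraicClosure ℚ))).IsRoot α →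
          2 ≤ ((restrictF u v).map (algebraMap ℚ (AlgebraicClosure ℚ))).rootMultiplicity α) ∧
        (∀ α : AlgebraicClosure ℚ,
          ((restrictF v u).map (algebraMap ℚ (AlgebraicClosure ℚ))).IsRoot α →
          2 ≤ ((restrictF v u).map (algebraMap ℚ (AlgebraicClosure ℚ))).rootMultiplicity α)} := by
    intro t ht
    have hct : (1 : ℚ) - t ^ 3 ≠ 0 := aux_cube_ne_one ht
    refine ⟨hrank t, ⟨u t, (hWmem t).1, ?_⟩, ?_⟩
    · simp only [hu]
      show (1 : ℚ) ^ 4 - 1 * t ^ 3 - 0 ^ 4 + 0 * 0 ^ 3 ≠ 0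
      intro h; exact hct (by linarith)
    · intro p q hpq
      -- p and q are combinations of u t and v0
      have hWfeq : Wf t = Submodule.span ℚ ({u t, v0} : Set (Fin 4 → ℚ)) := rfl
      have hp' : p ∈ Submodule.span ℚ ({u t, v0} : Set (Fin 4 → ℚ)) := by
        rw [← hWfeq, ← hpq]
        exact Submodule.subset_span (Set.mem_insert _ _)
      have hq : q ∈ Submodule.span ℚ ({u t, v0} : Set (Fin 4 → ℚ)) := by
        rw [← hWfeq, ← hpq]
        exact Submodule.subset_span (Set.mem_insert_of_mem _ rfl)
      rw [Submodule.mem_span_pair] at hp' hq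
      obtain ⟨a, b, hab⟩ := hp'
      obtain ⟨c, d, hcd⟩ := hq
      -- not both a = 0 and c = 0, else span has rank ≤ 1
      have hac : a ≠ 0 ∨ c ≠ 0 := by
        by_contra hcon
        push_neg at hcon
        obtain ⟨ha0, hc0⟩ := hcon
        subst ha0 hc0
        have hsub : Submodule.span ℚ ({p, q} : Set (Fin 4 → ℚ)) ≤
            Submodule.span ℚ ({v0} : Set (Fin 4 → ℚ)) := by
          rw [Submodule.span_le]
          intro x hx
          rcases hx with h | h
          · subst h; rw [← hab]; simp only [zero_smul, zero_add]
            exact Submodule.smul_mem _ _ (Submodule.mem_span_singleton_self _)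
          · simp only [Set.mem_singleton_iff] at h
            subst h; rw [← hcd]; simp only [zero_smul, zero_add]
            exact Submodule.smul_mem _ _ (Submodule.mem_span_singleton_self _)
        have h1 : Module.finrank ℚ (Submodule.span ℚ ({p, q} : Set (Fin 4 → ℚ))) ≤
            Module.finrank ℚ (Submodule.span ℚ ({v0} : Set (Fin 4 → ℚ))) :=
          Submodule.finrank_mono hsub
        have hv0ne : v0 ≠ 0 := by
          intro h
          have := congrFun h 2
          simp [hv0] at this
        have h2 : Module.finrank ℚ (Submodule.span ℚ ({v0} : Set (Fin 4 → ℚ))) = 1 :=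
          finrank_span_singleton hv0ne
        rw [hpq, hrank t] at h1
        omega
      -- explicit coordinates of p and q
      have hpc : ∀ i, p i = (a • u t + b • v0) i := fun i => (congrFun hab i).symm
      have hqc : ∀ i, q i = (c • u t + d • v0) i := fun i => (congrFun hcd i).symm
      have hp0 : p 0 = a := by have := hpc 0; simpa [hu, hv0] using this
      have hp1 : p 1 = a * t := by have := hpc 1; simpa [hu, hv0] using this
      have hp2 : p 2 = b := by have := hpc 2; simpa [hu, hv0] using this
      have hp3 : p 3 = b := by have := hpc 3; simpa [hu, hv0] using this
      have hq0 : q 0 = c := by have := hqc 0; simpa [hu, hv0] using this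
      have hq1 : q 1 = c * t := by have := hqc 1; simpa [hu, hv0] using this
      have hq2 : q 2 = d := by have := hqc 2; simpa [hu, hv0] using this
      have hq3 : q 3 = d := by have := hqc 3; simpa [hu, hv0] using this
      -- the restricted polynomials are constants times fourth powers
      have key : ∀ x0 x1 x2 x3 y0 y1 y2 y3 : ℚ, x1 = x0 * t → y1 = y0 * t →
          x3 = x2 → y3 = y2 →
          quarticF (C x0 * X + C y0) (C x1 * X + C y1) (C x2 * X + C y2) (C x3 * X + C y3)
            = C (1 - t ^ 3) * (C x0 * X + C y0) ^ 4 := by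
        intro x0 x1 x2 x3 y0 y1 y2 y3 h1 h2 h3 h4
        subst h1 h2 h3 h4
        simp only [quarticF, map_sub, map_mul, map_pow, map_one, C_1]
        ring
      have hres1 : restrictF p q = C (1 - t ^ 3) * (C a * X + C c) ^ 4 := by
        rw [restrictF, hp0, hp1, hp2, hp3, hq0, hq1, hq2, hq3]
        exact key a (a * t) b b c (c * t) d d rfl rfl rfl rfl
      have hres2 : restrictF q p = C (1 - t ^ 3) * (C c * X + C a) ^ 4 := by
        rw [restrictF, hp0, hp1, hp2, hp3, hq0, hq1, hq2, hq3]
        exact key c (c * t) d d a (a * t) b b rfl rfl rfl rfl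
      -- transfer to the algebraic closure
      set φ := algebraMap ℚ (AlgebraicClosure ℚ) with hφ
      have hφinj : Function.Injective φ := (algebraMap ℚ (AlgebraicClosure ℚ)).injective
      have hcφ : φ (1 - t ^ 3) ≠ 0 := fun h => hct (hφinj (by rw [h, map_zero]))
      have haφ : φ a ≠ 0 ∨ φ c ≠ 0 := by
        rcases hac with h | h
        · exact Or.inl fun h' => h (hφinj (by rw [h', map_zero]))
        · exact Or.inr fun h' => h (hφinj (by rw [h', map_zero]))
      have hmap1 : (restrictF p q).map φ = C (φ (1 - t ^ 3)) * (C (φ a) * X + C (φ c)) ^ 4 := by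
        rw [hres1]
        simp [Polynomial.map_mul, Polynomial.map_pow, Polynomial.map_add, map_C, map_X]
      have hmap2 : (restrictF q p).map φ = C (φ (1 - t ^ 3)) * (C (φ c) * X + C (φ a)) ^ 4 := by
        rw [hres2]
        simp [Polynomial.map_mul, Polynomial.map_pow, Polynomial.map_add, map_C, map_X]
      constructor
      · intro α hroot
        rw [hmap1] at hroot ⊢
        exact aux_mult hcφ haφ hroot
      · intro α hroot
        rw [hmap2] at hroot ⊢
        exact aux_mult hcφ haφ.symm hroot
  -- conclude: the image of the infinite set {t ≠ 1} under the injective map Wf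
  have hsrc : {t : ℚ | t ≠ 1}.Infinite := (Set.finite_singleton (1:ℚ)).infinite_compl
  have : Set.MapsTo Wf {t : ℚ | t ≠ 1}
      {W : Submodule ℚ (Fin 4 → ℚ) |
      Module.finrank ℚ W = 2 ∧
      (∃ w ∈ W, quarticF (w 0) (w 1) (w 2) (w 3) ≠ 0) ∧
      ∀ u v : Fin 4 → ℚ, Submodule.span ℚ {u, v} = W →
        (∀ α : AlgebraicClosure ℚ,
          ((restrictF u v).map (algebraMap ℚ (AlgebraicClosure ℚ))).IsRoot α →
          2 ≤ ((restrictF u v).map (algebraMap ℚ (AlgebraicClosure ℚ))).rootMultiplicity α) ∧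
        (∀ α : AlgebraicClosure ℚ,
          ((restrictF v u).map (algebraMap ℚ (AlgebraicClosure ℚ))).IsRoot α →
          2 ≤ ((restrictF v u).map (algebraMap ℚ (AlgebraicClosure ℚ))).rootMultiplicity α)} :=
    fun t ht => hmem t ht
  exact Set.Infinite.mono (Set.image_subset_iff.2 this)
    (Set.Infinite.image (hinj.injOn) hsrc)
end
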